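/- arXiv:math/9905188 — 8 statements merged into one kernel-verified Lean document; each statement's English description precedes it below -/
import Mathlib

section
/- If (n,⟨,⟩,V) is of pH-type, then ⟨j(a)x, ι j(b)x⟩ = ⟨a,ιb⟩⟨x,ιx⟩ and ⟨j(a)x, ι j(a)y⟩ = ⟨a,ιa⟩⟨x,ιy⟩ for all a,b ∈ U⊕Z and x,y ∈ V⊕E. -/
/-!
Write `g x y := ⟨x, ι y⟩`; it is a symmetric form, and each `j(a)` is `g`-skew on `V ⊕ E`
with `j(a)² = -g(a, a)`. Skewness moves one `j(a)` across `g`, turning `g(j(a)x, j(a)y)` into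
`-g(x, j(a)² y) = g(a, a) g(x, y)`. For the mixed identity, polarizing `j(a)² = -g(a, a)` in `a`
gives `j(a)j(b) + j(b)j(a) = -2 g(a, b)`, and symmetry of `g` splits
`-g(x, (j(a)j(b) + j(b)j(a))x)` into two equal halves `g(j(a)x, j(b)x)`.
-/

namespace LinearMap.BilinForm

section CommRing

variable {R M N : Type*} [CommRing R] [AddCommGroup M] [Module R M] [AddCommGroup N] [Module R N]
  {g : LinearMap.BilinForm R M} {W : Submodule R M}

theorem apply_map_map_of_skew_of_sq_eq_neg_smul {T : M →ₗ[R] M} {c : R}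
    (hT : ∀ x ∈ W, T x ∈ W) (hskew : ∀ x ∈ W, ∀ y ∈ W, g (T x) y + g x (T y) = 0)
    (hsq : ∀ x ∈ W, T (T x) = -c • x) {x y : M} (hx : x ∈ W) (hy : y ∈ W) :
    g (T x) (T y) = c * g x y := by
  have h := hskew x hx (T y) (hT y hy)
  rw [hsq y hy, map_smul, smul_eq_mul] at h
  linear_combination h

theorem anticomm_eq_neg_two_smul_of_sq_eq_neg_smul {h : LinearMap.BilinForm R N}
    (hh : h.IsSymm) (j : N →ₗ[R] M →ₗ[R] M) {A : Submodule R N}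
    (hsq : ∀ a ∈ A, ∀ x ∈ W, j a (j a x) = -(h a a) • x)
    {a b : N} (ha : a ∈ A) (hb : b ∈ A) {x : M} (hx : x ∈ W) :
    j a (j b x) + j b (j a x) = -(2 * h a b) • x := by
  have hab := hsq (a + b) (add_mem ha hb) x hx
  simp only [map_add, LinearMap.add_apply, hsq a ha x hx, hsq b hb x hx, hh.eq b a] at hab
  linear_combination (norm := module) hab

end CommRing

theorem apply_map_map_self_of_skew_of_anticomm {R M : Type*} [CommRing R] [IsDomain R]
    [CharZero R] [AddCommGroup M] [Module R M] {g : LinearMap.BilinForm R M} (hg : g.IsSymm)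
    {W : Submodule R M} {S T : M →ₗ[R] M} {c : R} (hS : ∀ x ∈ W, S x ∈ W)
    (hT : ∀ x ∈ W, T x ∈ W) (hSskew : ∀ x ∈ W, ∀ y ∈ W, g (S x) y + g x (S y) = 0)
    (hTskew : ∀ x ∈ W, ∀ y ∈ W, g (T x) y + g x (T y) = 0)
    (hanti : ∀ x ∈ W, S (T x) + T (S x) = -(2 * c) • x) {x : M} (hx : x ∈ W) :
    g (S x) (T x) = c * g x x := by
  have hST := hSskew x hx (T x) (hT x hx)
  have hTS := hTskew x hx (S x) (hS x hx)
  have hsum : g x (S (T x)) + g x (T (S x)) = -(2 * c) * g x x := by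
    rw [← map_add, hanti x hx, map_smul, smul_eq_mul]
  refine mul_left_cancel₀ (two_ne_zero (α := R)) ?_
  linear_combination hST + hTS + hg.eq (S x) (T x) - hsum

end LinearMap.BilinForm

theorem pH_type_polarized_identities_general
    {n : Type*} [LieRing n] [LieAlgebra ℝ n]
    (B : LinearMap.BilinForm ℝ n) (hBsymm : ∀ x y : n, B x y = B y x)
    (U Z V E : Submodule ℝ n)
    (ι : n →ₗ[ℝ] n) (hιsa : ∀ x y : n, B (ι x) y = B x (ι y))
    (j : n →ₗ[ℝ] n →ₗ[ℝ] n)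
    (hjmap : ∀ a ∈ U ⊔ Z, ∀ x ∈ V ⊔ E, j a x ∈ V ⊔ E)
    (hjskew : ∀ a ∈ U ⊔ Z, ∀ x ∈ V ⊔ E, ∀ y ∈ V ⊔ E,
      B (j a x) (ι y) + B (ι x) (j a y) = 0)
    (hpH : ∀ a ∈ U ⊔ Z, ∀ x ∈ V ⊔ E, j a (j a x) = (-(B a (ι a))) • x) :
    (∀ a ∈ U ⊔ Z, ∀ b ∈ U ⊔ Z, ∀ x ∈ V ⊔ E,
        B (j a x) (ι (j b x)) = B a (ι b) * B x (ι x)) ∧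
    (∀ a ∈ U ⊔ Z, ∀ x ∈ V ⊔ E, ∀ y ∈ V ⊔ E,
        B (j a x) (ι (j a y)) = B a (ι a) * B x (ι y)) := by
  set g : LinearMap.BilinForm ℝ n := B.compl₂ ι
  have hg : g.IsSymm := ⟨fun x y => by
    simp only [g, LinearMap.compl₂_apply, hBsymm x, hιsa]⟩
  have hskew : ∀ a ∈ U ⊔ Z, ∀ x ∈ V ⊔ E, ∀ y ∈ V ⊔ E,
      g (j a x) y + g x (j a y) = 0 := by
    intro a ha x hx y hy
    simpa only [g, LinearMap.compl₂_apply, hιsa] using hjskew a ha x hx y hy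
  refine ⟨fun a ha b hb x hx => ?_, fun a ha x hx y hy => ?_⟩
  · have hanti : ∀ x ∈ V ⊔ E, j a (j b x) + j b (j a x) = -(2 * g a b) • x := fun x hx =>
      LinearMap.BilinForm.anticomm_eq_neg_two_smul_of_sq_eq_neg_smul hg j hpH ha hb hx
    exact LinearMap.BilinForm.apply_map_map_self_of_skew_of_anticomm hg (hjmap a ha) (hjmap b hb)
      (hskew a ha) (hskew b hb) hanti hx
  · exact LinearMap.BilinForm.apply_map_map_of_skew_of_sq_eq_neg_smul (hjmap a ha) (hskew a ha)
      (hpH a ha) hx hy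

/-- If `(n, ⟨,⟩, V)` is of pH-type, then the polarized identities
`⟨j(a)x, ι j(b)x⟩ = ⟨a, ιb⟩ ⟨x, ιx⟩` and `⟨j(a)x, ι j(a)y⟩ = ⟨a, ιa⟩ ⟨x, ιy⟩`
hold for all `a, b ∈ U ⊕ Z` and `x, y ∈ V ⊕ E`. -/
theorem pH_type_polarized_identities
    {n : Type*} [LieRing n] [LieAlgebra ℝ n]
    (B : LinearMap.BilinForm ℝ n) (hBsymm : ∀ x y : n, B x y = B y x)
    (U Z V E : Submodule ℝ n)
    (ι : n →ₗ[ℝ] n) (hι2 : ∀ x, ι (ι x) = x) (hιsa : ∀ x y : n, B (ι x) y = B x (ι y))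
    (j : n →ₗ[ℝ] n →ₗ[ℝ] n)
    (hjmap : ∀ a ∈ U ⊔ Z, ∀ x ∈ V ⊔ E, j a x ∈ V ⊔ E)
    (hjskew : ∀ a ∈ U ⊔ Z, ∀ x ∈ V ⊔ E, ∀ y ∈ V ⊔ E,
      B (j a x) (ι y) + B (ι x) (j a y) = 0)
    (hpH : ∀ a ∈ U ⊔ Z, ∀ x ∈ V ⊔ E, j a (j a x) = (-(B a (ι a))) • x) :
    (∀ a ∈ U ⊔ Z, ∀ b ∈ U ⊔ Z, ∀ x ∈ V ⊔ E,
        B (j a x) (ι (j b x)) = B a (ι b) * B x (ι x)) ∧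
    (∀ a ∈ U ⊔ Z, ∀ x ∈ V ⊔ E, ∀ y ∈ V ⊔ E,
        B (j a x) (ι (j a y)) = B a (ι a) * B x (ι y)) :=
  pH_type_polarized_identities_general B hBsymm U Z V E ι hιsa j hjmap hjskew hpH
end

section
/- For the 3-dimensional Heisenberg algebra with basis {u,v,e}, bracket [v,e]=u, and inner product ⟨u,v⟩=1, ⟨e,e⟩=ε̄ (all other products zero), the Levi-Civita connection of the associated left-invariant metric satisfies ∇_v v = −ε̄ e and ∇_v e = u, with all other covariant derivatives of basis vectors vanishing; consequently the curvature tensor vanishes identically. -/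
/-!
Both the metric adjoint of `ad` and the connection are pinned down by the nondegeneracy of the
form: `ad⁺_x y = (-x₃y₂, 0, ε̄⁻¹x₂y₂)`, hence `∇_x y = (x₂y₃, 0, -ε̄⁻¹x₂y₂)`. This connection
takes values in `span {u, e}` and `∇_z = 0` for every `z ∈ span {u, e}`; so `∇_x ∇_y w` is
symmetric in `x, y` and `∇_{[x,y]} = 0`, which makes the curvature vanish.
-/

noncomputable section

namespace HeisenbergNullCenter

def bracket (x y : ℝ × ℝ × ℝ) : ℝ × ℝ × ℝ := (x.2.1 * y.2.2 - x.2.2 * y.2.1, 0, 0)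

def form (eps : ℝ) (x y : ℝ × ℝ × ℝ) : ℝ := x.1 * y.2.1 + x.2.1 * y.1 + eps * x.2.2 * y.2.2

def adjointAd (eps : ℝ) (x y : ℝ × ℝ × ℝ) : ℝ × ℝ × ℝ :=
  (-(x.2.2 * y.2.1), 0, eps⁻¹ * (x.2.1 * y.2.1))

def connection (c : ℝ) (x y : ℝ × ℝ × ℝ) : ℝ × ℝ × ℝ :=
  (x.2.1 * y.2.2, 0, -(c * (x.2.1 * y.2.1)))

variable {eps : ℝ}

theorem form_left_injective (heps : eps ≠ 0) {a b : ℝ × ℝ × ℝ}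
    (h : ∀ w, form eps a w = form eps b w) : a = b := by
  have h₁ := h (0, 1, 0)
  have h₂ := h (1, 0, 0)
  have h₃ := h (0, 0, 1)
  simp only [form, mul_zero, mul_one, add_zero, zero_add] at h₁ h₂ h₃
  exact Prod.ext h₁ (Prod.ext h₂ (mul_left_cancel₀ heps h₃))

theorem form_adjointAd (heps : eps ≠ 0) (x y w : ℝ × ℝ × ℝ) :
    form eps (adjointAd eps x y) w = form eps y (bracket x w) := by
  simp only [form, adjointAd, bracket]
  field_simp
  ring

theorem eq_adjointAd (heps : eps ≠ 0) {adP : ℝ × ℝ × ℝ → ℝ × ℝ × ℝ → ℝ × ℝ × ℝ}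
    (hadP : ∀ x y w, form eps (adP x y) w = form eps y (bracket x w)) :
    adP = adjointAd eps :=
  funext₂ fun x y => form_left_injective heps fun w => by rw [hadP, form_adjointAd heps]

theorem levi_civita_eq_connection (x y : ℝ × ℝ × ℝ) :
    (2 : ℝ)⁻¹ • (bracket x y - adjointAd eps x y - adjointAd eps y x) = connection eps⁻¹ x y := by
  simp only [bracket, adjointAd, connection, Prod.smul_mk, Prod.mk_sub_mk, smul_eq_mul,
    Prod.mk.injEq]
  refine ⟨by ring, by ring, by ring⟩

theorem connection_curvature_eq_zero (c : ℝ) (x y w : ℝ × ℝ × ℝ) :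
    connection c x (connection c y w) - connection c y (connection c x w)
      - connection c (bracket x y) w = 0 := by
  simp only [connection, bracket, Prod.mk_sub_mk, Prod.mk_eq_zero]
  refine ⟨by ring, by ring, by ring⟩

end HeisenbergNullCenter

end

open HeisenbergNullCenter in
/-- The 3-dimensional Heisenberg algebra with null center: basis `{u, v, e}`,
bracket `[v,e] = u`, inner products `⟨u,v⟩ = 1`, `⟨e,e⟩ = ε̄` (all others zero).
We model it on `ℝ × ℝ × ℝ` with `u = (1,0,0)`, `v = (0,1,0)`, `e = (0,0,1)`.
The Levi-Civita connection `∇_x y = ½([x,y] - ad⁺_x y - ad⁺_y x)` of the associated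
left-invariant metric satisfies `∇_v v = -ε̄ e` and `∇_v e = u`, with all other
covariant derivatives of basis vectors vanishing; consequently the curvature tensor
`R(x,y)w = ∇_x ∇_y w - ∇_y ∇_x w - ∇_{[x,y]} w` vanishes identically. -/
theorem heisenberg_null_center_connection_and_flat
    (eps : ℝ) (heps : eps = 1 ∨ eps = -1)
    (br : ℝ × ℝ × ℝ → ℝ × ℝ × ℝ → ℝ × ℝ × ℝ)
    (hbr : ∀ x y, br x y = (x.2.1 * y.2.2 - x.2.2 * y.2.1, 0, 0))
    (B : ℝ × ℝ × ℝ → ℝ × ℝ × ℝ → ℝ)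
    (hB : ∀ x y, B x y = x.1 * y.2.1 + x.2.1 * y.1 + eps * x.2.2 * y.2.2)
    (adP : ℝ × ℝ × ℝ → ℝ × ℝ × ℝ → ℝ × ℝ × ℝ)
    (hadP : ∀ x y w, B (adP x y) w = B y (br x w))
    (nabla : ℝ × ℝ × ℝ → ℝ × ℝ × ℝ → ℝ × ℝ × ℝ)
    (hnabla : ∀ x y, nabla x y = (2:ℝ)⁻¹ • (br x y - adP x y - adP y x))
    (R : ℝ × ℝ × ℝ → ℝ × ℝ × ℝ → ℝ × ℝ × ℝ → ℝ × ℝ × ℝ)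
    (hR : ∀ x y w, R x y w = nabla x (nabla y w) - nabla y (nabla x w) - nabla (br x y) w)
    (u v e : ℝ × ℝ × ℝ) (hu : u = (1,0,0)) (hv : v = (0,1,0)) (he : e = (0,0,1)) :
    nabla v v = (-eps) • e ∧ nabla v e = u ∧
    nabla u u = 0 ∧ nabla u v = 0 ∧ nabla v u = 0 ∧ nabla u e = 0 ∧
    nabla e u = 0 ∧ nabla e v = 0 ∧ nabla e e = 0 ∧
    (∀ x y w, R x y w = 0) := by
  have heps₀ : eps ≠ 0 := by rcases heps with rfl | rfl <;> norm_num
  have heps_inv : eps⁻¹ = eps := by rcases heps with rfl | rfl <;> norm_num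
  obtain rfl : br = bracket := funext₂ hbr
  obtain rfl : B = form eps := funext₂ hB
  obtain rfl : adP = adjointAd eps := eq_adjointAd heps₀ hadP
  obtain rfl : nabla = connection eps := by
    rw [← heps_inv]
    exact funext₂ fun x y => (hnabla x y).trans (levi_civita_eq_connection x y)
  subst hu hv he
  refine ⟨?_, ?_, ?_, ?_, ?_, ?_, ?_, ?_, ?_,
    fun x y w => (hR x y w).trans (connection_curvature_eq_zero eps x y w)⟩ <;>
  simp [connection]
end

section
/- Let N be a 2-step nilpotent Lie group with left-invariant pseudoriemannian metric. Then the curvature operator annihilates the degenerate (null) part U of the center: R(u, x)y = 0 and R(x,y)u = 0 for all u ∈ U and x,y ∈ n; moreover R(z,z')z'' = 0 for all z,z',z'' in the center. In particular all planes tangent to the center are homaloidal (⟨R(x,y)y,x⟩ = 0). -/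
/-!
The null part `U` of the center is `B`-orthogonal to the whole center `U ⊔ Z`, which contains the
derived algebra `[n, n]`. Hence `ad⁺_x u = 0` for `u ∈ U`, while `ad⁺_c = 0` for every central `c`.
Every term of `∇_x y = ½([x,y] − ad⁺_x y − ad⁺_y x)` then vanishes as soon as one argument lies in
`U`, or both lie in the center, and this kills each of the three terms of `R`.
-/

section Adjoint

variable {n : Type*} [LieRing n] [LieAlgebra ℝ n] {B : LinearMap.BilinForm ℝ n}
  {adP : n →ₗ[ℝ] n →ₗ[ℝ] n}

theorem adP_eq_zero_of_forall_lie_eq_zero (hB : B.SeparatingLeft)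
    (hadP : ∀ x y w : n, B (adP x y) w = B y ⁅x, w⁆) {c : n} (hc : ∀ x : n, ⁅c, x⁆ = 0) (y : n) :
    adP c y = 0 :=
  hB _ fun w => by rw [hadP, hc, map_zero]

theorem adP_apply_eq_zero_of_orthogonal_lie (hB : B.SeparatingLeft)
    (hadP : ∀ x y w : n, B (adP x y) w = B y ⁅x, w⁆) {u : n} (hu : ∀ x w : n, B u ⁅x, w⁆ = 0)
    (x : n) : adP x u = 0 :=
  hB _ fun w => by rw [hadP, hu]

end Adjoint

section Curvature

variable {n : Type*} [LieRing n] [LieAlgebra ℝ n]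

noncomputable def leviCivita (adP : n →ₗ[ℝ] n →ₗ[ℝ] n) (x y : n) : n :=
  (2 : ℝ)⁻¹ • (⁅x, y⁆ - adP x y - adP y x)

def curvature (nabla : n → n → n) (x y w : n) : n :=
  nabla x (nabla y w) - nabla y (nabla x w) - nabla ⁅x, y⁆ w

variable (adP : n →ₗ[ℝ] n →ₗ[ℝ] n)

@[simp]
theorem leviCivita_zero_left (y : n) : leviCivita adP 0 y = 0 := by
  simp [leviCivita]

@[simp]
theorem leviCivita_zero_right (x : n) : leviCivita adP x 0 = 0 := by
  simp [leviCivita]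

theorem leviCivita_eq_zero {x y : n} (hxy : ⁅x, y⁆ = 0) (hx : adP x y = 0) (hy : adP y x = 0) :
    leviCivita adP x y = 0 := by
  simp [leviCivita, hxy, hx, hy]

theorem curvature_leviCivita_eq_zero_of_right {u : n} (hu : ∀ x, leviCivita adP x u = 0)
    (x y : n) : curvature (leviCivita adP) x y u = 0 := by
  simp [curvature, hu]

theorem curvature_leviCivita_eq_zero_of_left {u x : n} (hu : ∀ y, leviCivita adP u y = 0)
    (hux : ⁅u, x⁆ = 0) (y : n) : curvature (leviCivita adP) u x y = 0 := by
  simp [curvature, hu, hux]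

theorem curvature_leviCivita_eq_zero_of_lie_eq_zero {x y w : n} (hxy : ⁅x, y⁆ = 0)
    (hx : leviCivita adP x w = 0) (hy : leviCivita adP y w = 0) :
    curvature (leviCivita adP) x y w = 0 := by
  simp [curvature, hxy, hx, hy]

end Curvature

theorem central_planes_homaloidal_general
    {n : Type*} [LieRing n] [LieAlgebra ℝ n]
    (B : LinearMap.BilinForm ℝ n)
    (hBnd : B.Nondegenerate)
    (U Z : Submodule ℝ n)
    (hcent : ∀ c ∈ U ⊔ Z, ∀ x : n, ⁅c, x⁆ = 0)
    (h2step : ∀ x y : n, ⁅x, y⁆ ∈ U ⊔ Z)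
    (hUU : ∀ u ∈ U, ∀ u' ∈ U, B u u' = 0)
    (hUZ : ∀ u ∈ U, ∀ z ∈ Z, B u z = 0)
    (adP : n →ₗ[ℝ] n →ₗ[ℝ] n)
    (hadP : ∀ x y w : n, B (adP x y) w = B y ⁅x, w⁆)
    (nabla : n → n → n)
    (hnabla : ∀ x y : n, nabla x y = (2:ℝ)⁻¹ • (⁅x, y⁆ - adP x y - adP y x))
    (R : n → n → n → n)
    (hR : ∀ x y w : n,
      R x y w = nabla x (nabla y w) - nabla y (nabla x w) - nabla ⁅x, y⁆ w) :
    (∀ u ∈ U, ∀ x y : n, R u x y = 0 ∧ R x y u = 0) ∧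
    (∀ c ∈ U ⊔ Z, ∀ c' ∈ U ⊔ Z, ∀ c'' ∈ U ⊔ Z, R c c' c'' = 0) ∧
    (∀ c ∈ U ⊔ Z, ∀ c' ∈ U ⊔ Z, B (R c c' c') c = 0) := by
  obtain rfl : nabla = leviCivita adP := funext₂ hnabla
  obtain rfl : R = curvature (leviCivita adP) := funext₃ hR
  have hU_orth : ∀ u ∈ U, U ⊔ Z ≤ LinearMap.ker (B u) := fun u hu =>
    sup_le (hUU u hu) (hUZ u hu)
  have hadP_cent : ∀ c ∈ U ⊔ Z, ∀ y, adP c y = 0 := fun c hc =>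
    adP_eq_zero_of_forall_lie_eq_zero hBnd.1 hadP (hcent c hc)
  have hadP_U : ∀ u ∈ U, ∀ x, adP x u = 0 := fun u hu =>
    adP_apply_eq_zero_of_orthogonal_lie hBnd.1 hadP fun x w => hU_orth u hu (h2step x w)
  have hnabla_U : ∀ u ∈ U, ∀ y, leviCivita adP u y = 0 ∧ leviCivita adP y u = 0 := by
    intro u hu y
    have hu' : u ∈ U ⊔ Z := Submodule.mem_sup_left hu
    refine ⟨leviCivita_eq_zero adP (hcent u hu' y) (hadP_cent u hu' y) (hadP_U u hu y),
      leviCivita_eq_zero adP ?_ (hadP_U u hu y) (hadP_cent u hu' y)⟩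
    rw [← lie_skew, hcent u hu' y, neg_zero]
  have hnabla_cent : ∀ c ∈ U ⊔ Z, ∀ c' ∈ U ⊔ Z, leviCivita adP c c' = 0 := fun c hc c' hc' =>
    leviCivita_eq_zero adP (hcent c hc c') (hadP_cent c hc c') (hadP_cent c' hc' c)
  have hR_cent : ∀ c ∈ U ⊔ Z, ∀ c' ∈ U ⊔ Z, ∀ c'' ∈ U ⊔ Z,
      curvature (leviCivita adP) c c' c'' = 0 := fun c hc c' hc' c'' hc'' =>
    curvature_leviCivita_eq_zero_of_lie_eq_zero adP (hcent c hc c')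
      (hnabla_cent c hc c'' hc'') (hnabla_cent c' hc' c'' hc'')
  refine ⟨fun u hu x y => ⟨?_, ?_⟩, hR_cent, fun c hc c' hc' => ?_⟩
  · exact curvature_leviCivita_eq_zero_of_left adP (fun y => (hnabla_U u hu y).1)
      (hcent u (Submodule.mem_sup_left hu) x) y
  · exact curvature_leviCivita_eq_zero_of_right adP (fun x => (hnabla_U u hu x).2) x y
  · rw [hR_cent c hc c' hc' c' hc', map_zero, LinearMap.zero_apply]

/-- Let `N` be a 2-step nilpotent Lie group with left-invariant pseudoriemannian
metric, with Lie algebra `n = U ⊕ Z ⊕ V ⊕ E` (`U ⊕ Z` the center, `U` its null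
part), Levi-Civita connection `∇_x y = ½([x,y] - ad⁺_x y - ad⁺_y x)` and curvature
`R(x,y)w = ∇_x ∇_y w - ∇_y ∇_x w - ∇_{[x,y]} w`.  Then the curvature operator
annihilates the null part `U` of the center: `R(u,x)y = 0` and `R(x,y)u = 0` for all
`u ∈ U` and `x, y ∈ n`; moreover `R(z,z')z'' = 0` for all `z, z', z''` in the
center.  In particular all planes tangent to the center are homaloidal:
`⟨R(c,c')c', c⟩ = 0`. -/
theorem central_planes_homaloidal
    {n : Type*} [LieRing n] [LieAlgebra ℝ n]
    (B : LinearMap.BilinForm ℝ n) (hBsymm : ∀ x y : n, B x y = B y x)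
    (hBnd : B.Nondegenerate)
    (U Z V E : Submodule ℝ n)
    (hcent : ∀ c ∈ U ⊔ Z, ∀ x : n, ⁅c, x⁆ = 0)
    (h2step : ∀ x y : n, ⁅x, y⁆ ∈ U ⊔ Z)
    (hdecomp : U ⊔ Z ⊔ V ⊔ E = ⊤)
    (hUU : ∀ u ∈ U, ∀ u' ∈ U, B u u' = 0)
    (hVV : ∀ v ∈ V, ∀ v' ∈ V, B v v' = 0)
    (hUZ : ∀ u ∈ U, ∀ z ∈ Z, B u z = 0)
    (hUE : ∀ u ∈ U, ∀ e ∈ E, B u e = 0)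
    (hVZ : ∀ v ∈ V, ∀ z ∈ Z, B v z = 0)
    (hVE : ∀ v ∈ V, ∀ e ∈ E, B v e = 0)
    (hZE : ∀ z ∈ Z, ∀ e ∈ E, B z e = 0)
    (adP : n →ₗ[ℝ] n →ₗ[ℝ] n)
    (hadP : ∀ x y w : n, B (adP x y) w = B y ⁅x, w⁆)
    (nabla : n → n → n)
    (hnabla : ∀ x y : n, nabla x y = (2:ℝ)⁻¹ • (⁅x, y⁆ - adP x y - adP y x))
    (R : n → n → n → n)
    (hR : ∀ x y w : n,
      R x y w = nabla x (nabla y w) - nabla y (nabla x w) - nabla ⁅x, y⁆ w) :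
    (∀ u ∈ U, ∀ x y : n, R u x y = 0 ∧ R x y u = 0) ∧
    (∀ c ∈ U ⊔ Z, ∀ c' ∈ U ⊔ Z, ∀ c'' ∈ U ⊔ Z, R c c' c'' = 0) ∧
    (∀ c ∈ U ⊔ Z, ∀ c' ∈ U ⊔ Z, B (R c c' c') c = 0) :=
  central_planes_homaloidal_general B hBnd U Z hcent h2step hUU hUZ adP hadP nabla hnabla R hR
end

section
/- For orthonormal z ∈ Z and e ∈ E, the sectional curvature is K(z,e) = ¼ ε_z ε̄_e ⟨j(ιz)e, j(ιz)e⟩, where ε_z = ⟨z,z⟩ and ε̄_e = ⟨e,e⟩. -/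
/-!
For a central `c`, pairing the Koszul formula with `c` kills every term except the bracket,
so `⟨∇_x w, c⟩ = ½⟨ad⁺_x c, w⟩`. Applied to the three terms of `R(c,x)x` this leaves only
`-½⟨ad⁺_x c, ∇_c x⟩ = ¼⟨ad⁺_x c, ad⁺_x c⟩`, and `j(ιc)x = ι ad⁺_x c` has the same norm because
`ι` is a self-adjoint involution. Since `ε_z² = ε̄_e² = 1`, dividing by `ε_z ε̄_e` is multiplying by it.
-/

section CentralCurvature

variable {n : Type*} [LieRing n] [LieAlgebra ℝ n]
  {B : LinearMap.BilinForm ℝ n} {adP : n →ₗ[ℝ] n →ₗ[ℝ] n} {nabla : n → n → n}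

theorem adjoint_ad_central_apply_eq_zero
    (hadP : ∀ x y w : n, B (adP x y) w = B y ⁅x, w⁆)
    {c : n} (hc : ∀ x : n, ⁅c, x⁆ = 0) (x y : n) :
    B (adP c x) y = 0 := by
  rw [hadP, hc, map_zero]

theorem nabla_inner_central
    (hBsymm : ∀ x y : n, B x y = B y x)
    (hadP : ∀ x y w : n, B (adP x y) w = B y ⁅x, w⁆)
    (hnabla : ∀ x y : n, nabla x y = (2:ℝ)⁻¹ • (⁅x, y⁆ - adP x y - adP y x))
    {c : n} (hc : ∀ x : n, ⁅c, x⁆ = 0) (x w : n) :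
    B (nabla x w) c = (2:ℝ)⁻¹ * B (adP x c) w := by
  have hxc : ⁅x, c⁆ = 0 := by rw [← lie_skew, hc, neg_zero]
  have hwc : ⁅w, c⁆ = 0 := by rw [← lie_skew, hc, neg_zero]
  rw [hnabla, LinearMap.BilinForm.smul_left, LinearMap.BilinForm.sub_left,
    LinearMap.BilinForm.sub_left, hadP, hadP, hxc, hwc, map_zero, map_zero, hadP, hBsymm]
  ring

theorem nabla_central_left
    (hnabla : ∀ x y : n, nabla x y = (2:ℝ)⁻¹ • (⁅x, y⁆ - adP x y - adP y x))
    {c : n} (hc : ∀ x : n, ⁅c, x⁆ = 0) (x : n) :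
    nabla c x = -((2:ℝ)⁻¹ • (adP c x + adP x c)) := by
  rw [hnabla, hc, zero_sub, sub_eq_add_neg, ← neg_add, smul_neg]

theorem curvature_inner_central
    (hBsymm : ∀ x y : n, B x y = B y x)
    (hadP : ∀ x y w : n, B (adP x y) w = B y ⁅x, w⁆)
    (hnabla : ∀ x y : n, nabla x y = (2:ℝ)⁻¹ • (⁅x, y⁆ - adP x y - adP y x))
    {R : n → n → n → n}
    (hR : ∀ x y w : n, R x y w = nabla x (nabla y w) - nabla y (nabla x w) - nabla ⁅x, y⁆ w)
    {c : n} (hc : ∀ x : n, ⁅c, x⁆ = 0) (x : n) :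
    B (R c x x) c = (4:ℝ)⁻¹ * B (adP x c) (adP x c) := by
  have hpair := nabla_inner_central hBsymm hadP hnabla hc
  have hcentral := adjoint_ad_central_apply_eq_zero hadP hc
  rw [hR, LinearMap.BilinForm.sub_left, LinearMap.BilinForm.sub_left, hpair, hpair, hpair,
    hcentral, hc, map_zero, LinearMap.zero_apply, nabla_central_left hnabla hc,
    map_neg, map_smul, map_add, hBsymm (adP x c) (adP c x), hcentral]
  simp only [smul_eq_mul, map_zero, LinearMap.zero_apply]
  ring

end CentralCurvature

theorem LinearMap.BilinForm.apply_involution_self {M : Type*} [AddCommGroup M] [Module ℝ M]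
    {B : LinearMap.BilinForm ℝ M} {ι : M →ₗ[ℝ] M}
    (hι2 : ∀ x, ι (ι x) = x) (hιsa : ∀ x y : M, B (ι x) y = B x (ι y)) (v : M) :
    B (ι v) (ι v) = B v v := by
  rw [hιsa, hι2]

theorem div_sign_mul_sign {s t : ℝ} (hs : s = 1 ∨ s = -1) (ht : t = 1 ∨ t = -1) (q : ℝ) :
    q / (s * t) = s * t * q := by
  rcases hs with rfl | rfl <;> rcases ht with rfl | rfl <;> ring

theorem sectional_curvature_Z_E_general
    {n : Type*} [LieRing n] [LieAlgebra ℝ n]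
    (B : LinearMap.BilinForm ℝ n) (hBsymm : ∀ x y : n, B x y = B y x)
    (U Z : Submodule ℝ n)
    (hcent : ∀ c ∈ U ⊔ Z, ∀ x : n, ⁅c, x⁆ = 0)
    (ι : n →ₗ[ℝ] n) (hι2 : ∀ x, ι (ι x) = x) (hιsa : ∀ x y : n, B (ι x) y = B x (ι y))
    (adP : n →ₗ[ℝ] n →ₗ[ℝ] n)
    (hadP : ∀ x y w : n, B (adP x y) w = B y ⁅x, w⁆)
    (j : n →ₗ[ℝ] n →ₗ[ℝ] n)
    (hj : ∀ a x : n, j a x = ι (adP x (ι a)))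
    (nabla : n → n → n)
    (hnabla : ∀ x y : n, nabla x y = (2:ℝ)⁻¹ • (⁅x, y⁆ - adP x y - adP y x))
    (R : n → n → n → n)
    (hR : ∀ x y w : n,
      R x y w = nabla x (nabla y w) - nabla y (nabla x w) - nabla ⁅x, y⁆ w)
    (z e : n) (hz : z ∈ Z)
    (hz1 : B z z = 1 ∨ B z z = -1) (he1 : B e e = 1 ∨ B e e = -1)
    (hze : B z e = 0) :
    B (R z e e) z / (B z z * B e e - B z e ^ 2)
      = (4:ℝ)⁻¹ * B z z * B e e * B (j (ι z) e) (j (ι z) e) := by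
  have hzc : ∀ x : n, ⁅z, x⁆ = 0 := hcent z (Submodule.mem_sup_right hz)
  have hjnorm : B (j (ι z) e) (j (ι z) e) = B (adP e z) (adP e z) := by
    rw [hj, hι2, LinearMap.BilinForm.apply_involution_self hι2 hιsa]
  rw [curvature_inner_central hBsymm hadP hnabla hR hzc, hjnorm, hze,
    sq, mul_zero, sub_zero, div_sign_mul_sign hz1 he1]
  ring

/-- For orthonormal `z ∈ Z` and `e ∈ E`, the sectional curvature is
`K(z,e) = ¼ ε_z ε̄_e ⟨j(ιz)e, j(ιz)e⟩`, where `ε_z = ⟨z,z⟩` and `ε̄_e = ⟨e,e⟩`.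
Here `n = U ⊕ Z ⊕ V ⊕ E` is a 2-step nilpotent metric Lie algebra, the Levi-Civita
connection is `∇_x y = ½([x,y] - ad⁺_x y - ad⁺_y x)`, `j(a)x = ι ad⁺_x (ι a)`, and
`K(x,y) = ⟨R(x,y)y, x⟩ / (⟨x,x⟩⟨y,y⟩ - ⟨x,y⟩²)`. -/
theorem sectional_curvature_Z_E
    {n : Type*} [LieRing n] [LieAlgebra ℝ n]
    (B : LinearMap.BilinForm ℝ n) (hBsymm : ∀ x y : n, B x y = B y x)
    (hBnd : B.Nondegenerate)
    (U Z V E : Submodule ℝ n)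
    (hcent : ∀ c ∈ U ⊔ Z, ∀ x : n, ⁅c, x⁆ = 0)
    (h2step : ∀ x y : n, ⁅x, y⁆ ∈ U ⊔ Z)
    (hdecomp : U ⊔ Z ⊔ V ⊔ E = ⊤)
    (hUU : ∀ u ∈ U, ∀ u' ∈ U, B u u' = 0)
    (hVV : ∀ v ∈ V, ∀ v' ∈ V, B v v' = 0)
    (hUZ : ∀ u ∈ U, ∀ z ∈ Z, B u z = 0)
    (hUE : ∀ u ∈ U, ∀ e ∈ E, B u e = 0)
    (hVZ : ∀ v ∈ V, ∀ z ∈ Z, B v z = 0)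
    (hVE : ∀ v ∈ V, ∀ e ∈ E, B v e = 0)
    (hZE : ∀ z ∈ Z, ∀ e ∈ E, B z e = 0)
    (ι : n →ₗ[ℝ] n) (hι2 : ∀ x, ι (ι x) = x) (hιsa : ∀ x y : n, B (ι x) y = B x (ι y))
    (hιU : ∀ x ∈ U, ι x ∈ V) (hιV : ∀ x ∈ V, ι x ∈ U)
    (hιZ : ∀ x ∈ Z, ι x ∈ Z) (hιE : ∀ x ∈ E, ι x ∈ E)
    (adP : n →ₗ[ℝ] n →ₗ[ℝ] n)
    (hadP : ∀ x y w : n, B (adP x y) w = B y ⁅x, w⁆)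
    (j : n →ₗ[ℝ] n →ₗ[ℝ] n)
    (hj : ∀ a x : n, j a x = ι (adP x (ι a)))
    (nabla : n → n → n)
    (hnabla : ∀ x y : n, nabla x y = (2:ℝ)⁻¹ • (⁅x, y⁆ - adP x y - adP y x))
    (R : n → n → n → n)
    (hR : ∀ x y w : n,
      R x y w = nabla x (nabla y w) - nabla y (nabla x w) - nabla ⁅x, y⁆ w)
    (z e : n) (hz : z ∈ Z) (he : e ∈ E)
    (hz1 : B z z = 1 ∨ B z z = -1) (he1 : B e e = 1 ∨ B e e = -1)
    (hze : B z e = 0) :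
    B (R z e e) z / (B z z * B e e - B z e ^ 2)
      = (4:ℝ)⁻¹ * B z z * B e e * B (j (ι z) e) (j (ι z) e) :=
  sectional_curvature_Z_E_general B hBsymm U Z hcent ι hι2 hιsa adP hadP j hj nabla hnabla R hR z e
    hz hz1 he1 hze
end

section
/- For orthonormal e,e' ∈ E, the sectional curvature is K(e,e') = −¾ ε̄ ε̄' ⟨[e,e'],[e,e']⟩, where ε̄ = ⟨e,e⟩ and ε̄' = ⟨e',e'⟩. -/
/-!
Vectors of `E` are orthogonal to the derived algebra `[n, n] ⊆ U ⊕ Z`, so `ad⁺_x e = 0` for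
`e ∈ E`, and `ad⁺_c = 0` for `c` central. Hence `∇_{e'} e' = 0`, `∇_e e' = ½ [e, e']`, and with
`c = [e, e']` central, `∇_{e'} c = ∇_c e' = -½ ad⁺_{e'} c`, which gives
`R(e, e') e' = ¾ ad⁺_{e'} c` and `⟨R(e, e') e', e⟩ = ¾ ⟨c, [e', e]⟩ = -¾ ⟨c, c⟩`.
Dividing by `ε̄ ε̄' = ±1` is the same as multiplying by it.
-/

namespace MetricLieAlgebra

variable {n : Type*} [LieRing n] [LieAlgebra ℝ n] (adP : n →ₗ[ℝ] n →ₗ[ℝ] n)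

noncomputable def leviCivita (x y : n) : n := (2 : ℝ)⁻¹ • (⁅x, y⁆ - adP x y - adP y x)

def curvature (nabla : n → n → n) (x y w : n) : n :=
  nabla x (nabla y w) - nabla y (nabla x w) - nabla ⁅x, y⁆ w

theorem adjoint_apply_eq_zero {B : LinearMap.BilinForm ℝ n} (hB : B.SeparatingLeft)
    (hadP : ∀ x y w : n, B (adP x y) w = B y ⁅x, w⁆) {x y : n} (h : ∀ w, B y ⁅x, w⁆ = 0) :
    adP x y = 0 :=
  hB _ fun w => (hadP x y w).trans (h w)

theorem leviCivita_zero_right (x : n) : leviCivita adP x 0 = 0 := by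
  simp [leviCivita]

theorem leviCivita_smul_right (x y : n) (a : ℝ) :
    leviCivita adP x (a • y) = a • leviCivita adP x y := by
  simp only [leviCivita, lie_smul, map_smul, LinearMap.smul_apply]
  module

theorem leviCivita_of_adjoint_eq_zero {x y : n} (hxy : adP x y = 0) (hyx : adP y x = 0) :
    leviCivita adP x y = (2 : ℝ)⁻¹ • ⁅x, y⁆ := by
  rw [leviCivita, hxy, hyx, sub_zero, sub_zero]

theorem leviCivita_central_left {c : n} (hc : ∀ x : n, ⁅c, x⁆ = 0) (hcad : ∀ y, adP c y = 0)
    (y : n) : leviCivita adP c y = -((2 : ℝ)⁻¹ • adP y c) := by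
  rw [leviCivita, hc, hcad]
  module

theorem leviCivita_central_right {c : n} (hc : ∀ x : n, ⁅c, x⁆ = 0) (hcad : ∀ y, adP c y = 0)
    (y : n) : leviCivita adP y c = -((2 : ℝ)⁻¹ • adP y c) := by
  rw [leviCivita, ← lie_skew, hc, hcad]
  module

theorem curvature_leviCivita_apply {e e' : n} (he : ∀ x, adP x e = 0) (he' : ∀ x, adP x e' = 0)
    (hc : ∀ x : n, ⁅⁅e, e'⁆, x⁆ = 0) (hcad : ∀ y, adP ⁅e, e'⁆ y = 0) :
    curvature (leviCivita adP) e e' e' = (3 / 4 : ℝ) • adP e' ⁅e, e'⁆ := by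
  have h_e'e' : leviCivita adP e' e' = 0 := by
    rw [leviCivita_of_adjoint_eq_zero adP (he' e') (he' e'), lie_self, smul_zero]
  have h_ee' : leviCivita adP e e' = (2 : ℝ)⁻¹ • ⁅e, e'⁆ :=
    leviCivita_of_adjoint_eq_zero adP (he' e) (he e')
  rw [curvature, h_e'e', leviCivita_zero_right, h_ee', leviCivita_smul_right,
    leviCivita_central_right adP hc hcad, leviCivita_central_left adP hc hcad]
  module

theorem bilin_curvature_leviCivita_apply {B : LinearMap.BilinForm ℝ n} (hB : B.SeparatingLeft)
    (hadP : ∀ x y w : n, B (adP x y) w = B y ⁅x, w⁆) {e e' : n} (he : ∀ x, adP x e = 0)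
    (he' : ∀ x, adP x e' = 0) (hc : ∀ x : n, ⁅⁅e, e'⁆, x⁆ = 0) :
    B (curvature (leviCivita adP) e e' e') e = -(3 / 4 : ℝ) * B ⁅e, e'⁆ ⁅e, e'⁆ := by
  have hcad : ∀ y, adP ⁅e, e'⁆ y = 0 := fun y =>
    adjoint_apply_eq_zero adP hB hadP fun w => by rw [hc w, map_zero]
  rw [curvature_leviCivita_apply adP he he' hc hcad, map_smul, LinearMap.smul_apply, hadP,
    ← lie_skew e' e, map_neg, smul_eq_mul]
  ring

end MetricLieAlgebra

theorem sectional_curvature_E_E_general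
    {n : Type*} [LieRing n] [LieAlgebra ℝ n]
    (B : LinearMap.BilinForm ℝ n) (hBsymm : ∀ x y : n, B x y = B y x)
    (hBnd : B.Nondegenerate)
    (U Z E : Submodule ℝ n)
    (hcent : ∀ c ∈ U ⊔ Z, ∀ x : n, ⁅c, x⁆ = 0)
    (h2step : ∀ x y : n, ⁅x, y⁆ ∈ U ⊔ Z)
    (hUE : ∀ u ∈ U, ∀ e ∈ E, B u e = 0)
    (hZE : ∀ z ∈ Z, ∀ e ∈ E, B z e = 0)
    (adP : n →ₗ[ℝ] n →ₗ[ℝ] n)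
    (hadP : ∀ x y w : n, B (adP x y) w = B y ⁅x, w⁆)
    (nabla : n → n → n)
    (hnabla : ∀ x y : n, nabla x y = (2:ℝ)⁻¹ • (⁅x, y⁆ - adP x y - adP y x))
    (R : n → n → n → n)
    (hR : ∀ x y w : n,
      R x y w = nabla x (nabla y w) - nabla y (nabla x w) - nabla ⁅x, y⁆ w)
    (e e' : n) (he : e ∈ E) (he' : e' ∈ E)
    (he1 : B e e = 1 ∨ B e e = -1) (he'1 : B e' e' = 1 ∨ B e' e' = -1)
    (hee' : B e e' = 0) :
    B (R e e' e') e / (B e e * B e' e' - B e e' ^ 2)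
      = -(3/4 : ℝ) * B e e * B e' e' * B ⁅e, e'⁆ ⁅e, e'⁆ := by
  obtain rfl : nabla = MetricLieAlgebra.leviCivita adP := funext fun x => funext (hnabla x)
  obtain rfl : R = MetricLieAlgebra.curvature (MetricLieAlgebra.leviCivita adP) :=
    funext fun x => funext fun y => funext (hR x y)
  have hE_perp : ∀ f ∈ E, ∀ m ∈ U ⊔ Z, B m f = 0 := fun f hf m hm =>
    sup_le (c := LinearMap.ker (B.flip f)) (fun u hu => hUE u hu f hf)
      (fun z hz => hZE z hz f hf) hm
  have hadP_E : ∀ f ∈ E, ∀ x, adP x f = 0 := fun f hf x =>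
    MetricLieAlgebra.adjoint_apply_eq_zero adP hBnd.1 hadP fun w => by
      rw [hBsymm, hE_perp f hf _ (h2step x w)]
  rw [MetricLieAlgebra.bilin_curvature_leviCivita_apply adP hBnd.1 hadP (hadP_E e he)
    (hadP_E e' he') (hcent _ (h2step e e')), hee']
  rcases he1 with h | h <;> rcases he'1 with h' | h' <;> rw [h, h'] <;> ring

/-- For orthonormal `e, e' ∈ E`, the sectional curvature is
`K(e,e') = -¾ ε̄ ε̄' ⟨[e,e'], [e,e']⟩`, where `ε̄ = ⟨e,e⟩` and `ε̄' = ⟨e',e'⟩`.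
Here `n = U ⊕ Z ⊕ V ⊕ E` is a 2-step nilpotent metric Lie algebra, the Levi-Civita
connection is `∇_x y = ½([x,y] - ad⁺_x y - ad⁺_y x)`,
`R(x,y)w = ∇_x ∇_y w - ∇_y ∇_x w - ∇_{[x,y]} w`, and
`K(x,y) = ⟨R(x,y)y, x⟩ / (⟨x,x⟩⟨y,y⟩ - ⟨x,y⟩²)`. -/
theorem sectional_curvature_E_E
    {n : Type*} [LieRing n] [LieAlgebra ℝ n]
    (B : LinearMap.BilinForm ℝ n) (hBsymm : ∀ x y : n, B x y = B y x)
    (hBnd : B.Nondegenerate)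
    (U Z V E : Submodule ℝ n)
    (hcent : ∀ c ∈ U ⊔ Z, ∀ x : n, ⁅c, x⁆ = 0)
    (h2step : ∀ x y : n, ⁅x, y⁆ ∈ U ⊔ Z)
    (hdecomp : U ⊔ Z ⊔ V ⊔ E = ⊤)
    (hUU : ∀ u ∈ U, ∀ u' ∈ U, B u u' = 0)
    (hVV : ∀ v ∈ V, ∀ v' ∈ V, B v v' = 0)
    (hUZ : ∀ u ∈ U, ∀ z ∈ Z, B u z = 0)
    (hUE : ∀ u ∈ U, ∀ e ∈ E, B u e = 0)
    (hVZ : ∀ v ∈ V, ∀ z ∈ Z, B v z = 0)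
    (hVE : ∀ v ∈ V, ∀ e ∈ E, B v e = 0)
    (hZE : ∀ z ∈ Z, ∀ e ∈ E, B z e = 0)
    (adP : n →ₗ[ℝ] n →ₗ[ℝ] n)
    (hadP : ∀ x y w : n, B (adP x y) w = B y ⁅x, w⁆)
    (nabla : n → n → n)
    (hnabla : ∀ x y : n, nabla x y = (2:ℝ)⁻¹ • (⁅x, y⁆ - adP x y - adP y x))
    (R : n → n → n → n)
    (hR : ∀ x y w : n,
      R x y w = nabla x (nabla y w) - nabla y (nabla x w) - nabla ⁅x, y⁆ w)
    (e e' : n) (he : e ∈ E) (he' : e' ∈ E)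
    (he1 : B e e = 1 ∨ B e e = -1) (he'1 : B e' e' = 1 ∨ B e' e' = -1)
    (hee' : B e e' = 0) :
    B (R e e' e') e / (B e e * B e' e' - B e e' ^ 2)
      = -(3/4 : ℝ) * B e e * B e' e' * B ⁅e, e'⁆ ⁅e, e'⁆ :=
  sectional_curvature_E_E_general B hBsymm hBnd U Z E hcent h2step hUE hZE adP hadP nabla hnabla R
    hR e e' he he' he1 he'1 hee'
end

section
/- In the flat case [n,n] ⊆ U, E = {0}: a geodesic γ with γ(0) = 1 and γ̇(0) = u₀+z₀+v₀ is given in exponential coordinates by v(t) = t v₀, z(t) = t z₀, u(t) = t u₀ + ½t² 𝒥v₀, where 𝒥v₀ = (ad⁺_{v₀}(z₀+v₀))^U. -/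
open Filter in
private lemma deriv_mem' {n : Type*} [NormedAddCommGroup n] [NormedSpace ℝ n]
    [FiniteDimensional ℝ n] (W : Submodule ℝ n) (f : ℝ → n)
    (hf : Differentiable ℝ f) (hmem : ∀ t, f t ∈ W) (t : ℝ) : deriv f t ∈ W := by
  have hcl : IsClosed (W : Set n) := Submodule.closed_of_finiteDimensional W
  have h := hasDerivAt_iff_tendsto_slope.mp (hf t).hasDerivAt
  refine hcl.mem_of_tendsto h ?_
  filter_upwards with s
  rw [slope_def_module]
  exact W.smul_mem _ (W.sub_mem (hmem s) (hmem t))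

private lemma quad_of_deriv2 {n : Type*} [NormedAddCommGroup n] [NormedSpace ℝ n]
    (f : ℝ → n) (hf : ContDiff ℝ (⊤ : ℕ∞) f) (c : n)
    (h : ∀ t, deriv (deriv f) t = c) :
    (∀ t, deriv f t = deriv f 0 + t • c) ∧
    (∀ t, f t = f 0 + t • deriv f 0 + (t ^ 2 / 2) • c) := by
  have hf' : ContDiff ℝ (⊤ : ℕ∞) f := hf.of_le (by simp)
  have hf1 : ContDiff ℝ (⊤ : ℕ∞) (deriv f) := (contDiff_infty_iff_deriv.mp hf').2
  have hfd : Differentiable ℝ f := hf'.differentiable (by simp)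
  have hfd1 : Differentiable ℝ (deriv f) := hf1.differentiable (by simp)
  have h1 : ∀ t, deriv f t = deriv f 0 + t • c := by
    intro t
    have hG : ∀ s : ℝ, HasDerivAt (fun r : ℝ => deriv f r - r • c) 0 s := by
      intro s
      have ha : HasDerivAt (deriv f) c s := h s ▸ (hfd1 s).hasDerivAt
      have hb : HasDerivAt (fun r : ℝ => r • c) c s := by
        simpa using (hasDerivAt_id s).smul_const c
      have h' := ha.sub hb; rw [sub_self] at h'; exact h'
    have hk := is_const_of_deriv_eq_zero (fun s => (hG s).differentiableAt)
      (fun s => (hG s).deriv) t 0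
    simp only [zero_smul, sub_zero] at hk
    have := sub_eq_iff_eq_add.mp hk
    rw [this]
  refine ⟨h1, fun t => ?_⟩
  have hG : ∀ s : ℝ, HasDerivAt
      (fun r : ℝ => f r - (r • deriv f 0 + (r ^ 2 / 2) • c)) 0 s := by
    intro s
    have ha : HasDerivAt f (deriv f s) s := (hfd s).hasDerivAt
    have hb : HasDerivAt (fun r : ℝ => r • deriv f 0) (deriv f 0) s := by
      simpa using (hasDerivAt_id s).smul_const (deriv f 0)
    have hc : HasDerivAt (fun r : ℝ => (r ^ 2 / 2) • c) (s • c) s := by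
      have := ((hasDerivAt_pow 2 s).div_const 2).smul_const c
      convert this using 2
      push_cast
      ring
    have := ha.sub (hb.add hc)
    rw [h1 s] at this
    rw [sub_self] at this; exact this
  have hk := is_const_of_deriv_eq_zero (fun s => (hG s).differentiableAt)
    (fun s => (hG s).deriv) t 0
  simp only [zero_smul, ne_eq, OfNat.ofNat_ne_zero, not_false_eq_true, zero_pow,
    zero_div, add_zero, sub_zero] at hk
  rw [sub_eq_iff_eq_add] at hk
  rw [hk]; abel


/-- In the flat case `[n,n] ⊆ U`, `E = {0}`: a geodesic `γ` with `γ(0) = 1` and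
`γ̇(0) = u₀ + z₀ + v₀` is given in exponential coordinates
`γ(t) = exp (u(t) + z(t) + v(t))` by `v(t) = t v₀`, `z(t) = t z₀`,
`u(t) = t u₀ + ½ t² 𝒥v₀`, where `𝒥v₀ = (ad⁺_{v₀}(z₀ + v₀))^U`.  The geodesic
equation is `d/dt(u̇ + ż + ½[v̇,v]) + v̈ - ad⁺_{v̇}(ż + v̇ + ½[v̇,v]) = 0`. -/
theorem flat_case_geodesics
    {n : Type*} [NormedAddCommGroup n] [NormedSpace ℝ n] [FiniteDimensional ℝ n]
    (br : n →L[ℝ] n →L[ℝ] n) (hbrskew : ∀ x : n, br x x = 0)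
    (B : LinearMap.BilinForm ℝ n) (hBsymm : ∀ x y : n, B x y = B y x)
    (hBnd : B.Nondegenerate)
    (U Z V : Submodule ℝ n)
    (hdecomp : U ⊔ Z ⊔ V = ⊤)
    (hUU : ∀ u ∈ U, ∀ u' ∈ U, B u u' = 0)
    (hVV : ∀ v ∈ V, ∀ v' ∈ V, B v v' = 0)
    (hUZ : ∀ u ∈ U, ∀ z ∈ Z, B u z = 0)
    (hVZ : ∀ v ∈ V, ∀ z ∈ Z, B v z = 0)
    (hbrU : ∀ x y : n, br x y ∈ U)
    (hcent : ∀ c ∈ U ⊔ Z, ∀ x : n, br c x = 0)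
    (adP : n →ₗ[ℝ] n →ₗ[ℝ] n)
    (hadP : ∀ x y w : n, B (adP x y) w = B y (br x w))
    (piU : n →ₗ[ℝ] n) (hpiU1 : ∀ x ∈ U, piU x = x) (hpiU0 : ∀ x ∈ Z ⊔ V, piU x = 0)
    (u z v : ℝ → n)
    (hu : ContDiff ℝ (⊤ : ℕ∞) u) (hz : ContDiff ℝ (⊤ : ℕ∞) z) (hv : ContDiff ℝ (⊤ : ℕ∞) v)
    (hmemU : ∀ t, u t ∈ U) (hmemZ : ∀ t, z t ∈ Z) (hmemV : ∀ t, v t ∈ V)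
    (u₀ z₀ v₀ : n) (hu₀ : u₀ ∈ U) (hz₀ : z₀ ∈ Z) (hv₀ : v₀ ∈ V)
    (hinit : u 0 = 0 ∧ z 0 = 0 ∧ v 0 = 0)
    (hinit' : deriv u 0 = u₀ ∧ deriv z 0 = z₀ ∧ deriv v 0 = v₀)
    (hgeo : ∀ t : ℝ,
      deriv (fun s => deriv u s + deriv z s + (2:ℝ)⁻¹ • br (deriv v s) (v s)) t
        + deriv (deriv v) t
        - adP (deriv v t) (deriv z t + deriv v t + (2:ℝ)⁻¹ • br (deriv v t) (v t))
        = 0) :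
    ∀ t : ℝ, v t = t • v₀ ∧ z t = t • z₀ ∧
      u t = t • u₀ + (t ^ 2 / 2) • piU (adP v₀ (z₀ + v₀)) := by

  obtain ⟨hu0, hz0, hv0⟩ := hinit
  obtain ⟨hu0', hz0', hv0'⟩ := hinit'
  -- antisymmetry of the bracket
  have hanti : ∀ x y : n, br x y = - br y x := by
    intro x y
    have h := hbrskew (x + y)
    simp only [map_add, ContinuousLinearMap.add_apply, hbrskew, zero_add, add_zero] at h
    rwa [add_comm, add_eq_zero_iff_eq_neg] at h
  have hbrw : ∀ w ∈ U ⊔ Z, ∀ x : n, br x w = 0 := by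
    intro w hw x
    rw [hanti, hcent w hw x, neg_zero]
  have hadPUZ : ∀ x y : n, ∀ w ∈ U ⊔ Z, B (adP x y) w = 0 := by
    intro x y w hw
    rw [hadP, hbrw w hw x, map_zero]
  -- smoothness / differentiability bookkeeping
  have mkD : ∀ f : ℝ → n, ContDiff ℝ (⊤ : ℕ∞) f →
      Differentiable ℝ f ∧ Differentiable ℝ (deriv f) := by
    intro f hf
    have hf' : ContDiff ℝ (⊤ : ℕ∞) f := hf.of_le (by simp)
    have hf1 : ContDiff ℝ (⊤ : ℕ∞) (deriv f) := (contDiff_infty_iff_deriv.mp hf').2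
    exact ⟨hf'.differentiable (by simp),
      hf1.differentiable (by simp)⟩
  obtain ⟨hud, hud1⟩ := mkD u hu
  obtain ⟨hzd, hzd1⟩ := mkD z hz
  obtain ⟨hvd, hvd1⟩ := mkD v hv
  -- memberships of derivatives
  have hmemU' : ∀ t, deriv u t ∈ U := deriv_mem' U u hud hmemU
  have hmemU'' : ∀ t, deriv (deriv u) t ∈ U := deriv_mem' U _ hud1 hmemU'
  have hmemZ' : ∀ t, deriv z t ∈ Z := deriv_mem' Z z hzd hmemZ
  have hmemZ'' : ∀ t, deriv (deriv z) t ∈ Z := deriv_mem' Z _ hzd1 hmemZ'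
  have hmemV' : ∀ t, deriv v t ∈ V := deriv_mem' V v hvd hmemV
  have hmemV'' : ∀ t, deriv (deriv v) t ∈ V := deriv_mem' V _ hvd1 hmemV'
  -- nondegeneracy through the decomposition
  have hzero : ∀ a : n, (∀ w ∈ U, B a w = 0) → (∀ w ∈ Z, B a w = 0) →
      (∀ w ∈ V, B a w = 0) → a = 0 := by
    intro a hU hZ hV
    refine hBnd.1 a ?_
    intro w
    have hw : w ∈ U ⊔ Z ⊔ V := hdecomp ▸ Submodule.mem_top
    obtain ⟨p, hp, q, hq, rfl⟩ := Submodule.mem_sup.mp hw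
    obtain ⟨p1, hp1, p2, hp2, rfl⟩ := Submodule.mem_sup.mp hp
    simp [map_add, hU _ hp1, hZ _ hp2, hV _ hq]
  -- the expanded geodesic equation
  have E : ∀ t, deriv (deriv u) t + deriv (deriv z) t
      + (2:ℝ)⁻¹ • br (deriv (deriv v) t) (v t) + deriv (deriv v) t
      - adP (deriv v t) (deriv z t + deriv v t + (2:ℝ)⁻¹ • br (deriv v t) (v t))
      = 0 := by
    intro t
    have h1 : HasDerivAt (deriv u) (deriv (deriv u) t) t := (hud1 t).hasDerivAt
    have h2 : HasDerivAt (deriv z) (deriv (deriv z) t) t := (hzd1 t).hasDerivAt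
    have hb : HasDerivAt (fun s => br (deriv v s)) (br (deriv (deriv v) t)) t :=
      br.hasFDerivAt.comp_hasDerivAt t (hvd1 t).hasDerivAt
    have h3 : HasDerivAt (fun s => br (deriv v s) (v s))
        (br (deriv (deriv v) t) (v t) + br (deriv v t) (deriv v t)) t :=
      hb.clm_apply (hvd t).hasDerivAt
    have hD : HasDerivAt (fun s => deriv u s + deriv z s + (2:ℝ)⁻¹ • br (deriv v s) (v s))
        (deriv (deriv u) t + deriv (deriv z) t
          + (2:ℝ)⁻¹ • (br (deriv (deriv v) t) (v t) + br (deriv v t) (deriv v t))) t :=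
      (h1.add h2).add (h3.const_smul ((2:ℝ)⁻¹))
    have hg := hgeo t
    rw [hD.deriv] at hg
    simpa only [hbrskew, add_zero] using hg
  -- components of the equation paired with B
  have hEB : ∀ t, ∀ w : n,
      B (deriv (deriv u) t) w + B (deriv (deriv z) t) w
        + (2:ℝ)⁻¹ * B (br (deriv (deriv v) t) (v t)) w + B (deriv (deriv v) t) w
        - B (adP (deriv v t)
            (deriv z t + deriv v t + (2:ℝ)⁻¹ • br (deriv v t) (v t))) w = 0 := by
    intro t w
    have h := congrArg (fun a => B a w) (E t)
    simpa only [map_add, map_sub, map_smul, LinearMap.add_apply, LinearMap.sub_apply,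
      LinearMap.smul_apply, smul_eq_mul, LinearMap.zero_apply, map_zero] using h
  -- v'' = 0
  have hv''0 : ∀ t, deriv (deriv v) t = 0 := by
    intro t
    refine hzero _ ?_ (fun w hw => hVZ _ (hmemV'' t) _ hw)
      (fun w hw => hVV _ (hmemV'' t) _ hw)
    intro w hw
    have h := hEB t w
    rw [hUU _ (hmemU'' t) _ hw,
      (hBsymm _ _).trans (hUZ w hw _ (hmemZ'' t)),
      hUU _ (hbrU _ _) _ hw,
      hadPUZ _ _ _ (Submodule.mem_sup_left hw)] at h
    linarith
  -- z'' = 0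
  have hz''0 : ∀ t, deriv (deriv z) t = 0 := by
    intro t
    refine hzero _ (fun w hw => (hBsymm _ _).trans (hUZ w hw _ (hmemZ'' t))) ?_
      (fun w hw => (hBsymm _ _).trans (hVZ w hw _ (hmemZ'' t)))
    intro w hw
    have h := hEB t w
    rw [hUZ _ (hmemU'' t) _ hw,
      hUZ _ (hbrU _ _) _ hw,
      hVZ _ (hmemV'' t) _ hw,
      hadPUZ _ _ _ (Submodule.mem_sup_right hw)] at h
    linarith
  -- u'' = adP term
  have hu''A : ∀ t, deriv (deriv u) t
      = adP (deriv v t) (deriv z t + deriv v t + (2:ℝ)⁻¹ • br (deriv v t) (v t)) := by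
    intro t
    have h := E t
    rw [hv''0 t, hz''0 t] at h
    simp only [map_zero, ContinuousLinearMap.zero_apply, smul_zero, add_zero] at h
    exact sub_eq_zero.mp h
  -- integrate v and z
  obtain ⟨hv1, hv2⟩ := quad_of_deriv2 v hv 0 hv''0
  obtain ⟨hz1, hz2⟩ := quad_of_deriv2 z hz 0 hz''0
  have hvt : ∀ t, v t = t • v₀ := by intro t; simpa [hv0, hv0'] using hv2 t
  have hv't : ∀ t, deriv v t = v₀ := by intro t; simpa [hv0'] using hv1 t
  have hzt : ∀ t, z t = t • z₀ := by intro t; simpa [hz0, hz0'] using hz2 t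
  have hz't : ∀ t, deriv z t = z₀ := by intro t; simpa [hz0'] using hz1 t
  -- u'' is constant
  have hu''c : ∀ t, deriv (deriv u) t = adP v₀ (z₀ + v₀) := by
    intro t
    rw [hu''A t, hv't t, hz't t, hvt t]
    have : br v₀ (t • v₀) = 0 := by rw [map_smul, hbrskew, smul_zero]
    rw [this, smul_zero, add_zero]
  have hcU : adP v₀ (z₀ + v₀) ∈ U := by
    rw [← hu''c 0]; exact hmemU'' 0
  obtain ⟨hu1, hu2⟩ := quad_of_deriv2 u hu (adP v₀ (z₀ + v₀)) hu''c
  intro t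
  refine ⟨hvt t, hzt t, ?_⟩
  rw [hu2 t, hu0, hu0', zero_add, hpiU1 _ hcU]
end

section
/- Translation of geodesics by central elements twists quadratically: given φ ∈ N with log φ = a* + x* (a* central, x* ∈ V⊕E) such that x* ⊥ [x*,n] and a' ⊥ [x*,n] where a' = a* + [x*,ξ] for some ξ ∈ n, the curve γ(t) = exp(ξ)·exp((t/ω*)(a'+x*)) is a geodesic translated by φ with φγ(t) = γ(t+ω*), where ω* = |a'+x*| if a'+x* is non-null (and ω*=1 otherwise); γ has unit speed when a'+x* is non-null. -/
/-!
In exponential coordinates the group law of a 2-step nilpotent group is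
`x * y = x + y + ½⁅x, y⁆`, which is associative, has the lines `ℝ c` as one-parameter
subgroups, and satisfies `φ * ξ = ξ * (φ + ⁅φ, ξ⁆)`. With `c = log φ + ⁅log φ, ξ⁆ = a' + x*`
this gives `φ exp(ξ) exp(s c) = exp(ξ) exp(c) exp(s c) = exp(ξ) exp((s + 1) c)`.
Since `a'` is central, `⁅c, ·⁆ = ⁅x*, ·⁆`, so the geodesic condition `⟨c, ⁅c, ·⁆⟩ = 0` is
exactly the two orthogonality hypotheses.
-/

section BCH

variable (K : Type*) {L : Type*} [Field K] [LieRing L] [LieAlgebra K L]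

def bchMul (x y : L) : L := x + y + (2 : K)⁻¹ • ⁅x, y⁆

variable {K}

theorem bchMul_assoc (h2step : ∀ x y z : L, ⁅⁅x, y⁆, z⁆ = 0) (x y z : L) :
    bchMul K (bchMul K x y) z = bchMul K x (bchMul K y z) := by
  have h2step' : ⁅x, ⁅y, z⁆⁆ = 0 := by rw [← lie_skew, h2step, neg_zero]
  simp only [bchMul, add_lie, lie_add, smul_lie, lie_smul, h2step, h2step', smul_zero, add_zero]
  module

theorem bchMul_smul_smul (c : L) (s r : K) : bchMul K (s • c) (r • c) = (s + r) • c := by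
  simp only [bchMul, smul_lie, lie_smul, lie_self, smul_zero, add_zero, add_smul]

theorem bchMul_eq_bchMul_conj [CharZero K] (h2step : ∀ x y z : L, ⁅⁅x, y⁆, z⁆ = 0) (φ ξ : L) :
    bchMul K φ ξ = bchMul K ξ (φ + ⁅φ, ξ⁆) := by
  have hξ : ⁅ξ, ⁅φ, ξ⁆⁆ = 0 := by rw [← lie_skew, h2step, neg_zero]
  have hskew : ⁅ξ, φ⁆ = -⁅φ, ξ⁆ := (lie_skew ξ φ).symm
  simp only [bchMul, lie_add, hξ, hskew, add_zero]
  module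

theorem bchMul_bchMul_smul_conj [CharZero K] (h2step : ∀ x y z : L, ⁅⁅x, y⁆, z⁆ = 0)
    (φ ξ : L) (s : K) :
    bchMul K φ (bchMul K ξ (s • (φ + ⁅φ, ξ⁆))) = bchMul K ξ ((s + 1) • (φ + ⁅φ, ξ⁆)) := by
  set c := φ + ⁅φ, ξ⁆
  calc bchMul K φ (bchMul K ξ (s • c))
      = bchMul K ξ (bchMul K c (s • c)) := by
        rw [← bchMul_assoc h2step, bchMul_eq_bchMul_conj h2step φ ξ, bchMul_assoc h2step]
    _ = bchMul K ξ ((s + 1) • c) := by rw [add_comm, ← bchMul_smul_smul, one_smul]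

end BCH

theorem adjoint_apply_self_eq_zero {R L : Type*} [CommRing R] [LieRing L] [LieAlgebra R L]
    {B : LinearMap.BilinForm R L} (hB : B.SeparatingLeft) {adP : L →ₗ[R] L →ₗ[R] L}
    (hadP : ∀ x y w : L, B (adP x y) w = B y ⁅x, w⁆) {c : L} (hc : ∀ y, B c ⁅c, y⁆ = 0) :
    adP c c = 0 :=
  hB _ fun w => (hadP c c w).trans (hc w)

theorem abs_apply_inv_sqrt_smul_self {M : Type*} [AddCommGroup M] [Module ℝ M]
    (B : LinearMap.BilinForm ℝ M) {v : M} (hv : B v v ≠ 0) :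
    |B ((√|B v v|)⁻¹ • v) ((√|B v v|)⁻¹ • v)| = 1 := by
  have hpos : 0 < |B v v| := abs_pos.mpr hv
  simp only [map_smul, LinearMap.smul_apply, smul_eq_mul, ← mul_assoc, ← mul_inv, abs_mul,
    Real.mul_self_sqrt hpos.le, abs_inv, abs_abs, inv_mul_cancel₀ hpos.ne']

theorem translated_geodesics_exist_general
    {n : Type*} [LieRing n] [LieAlgebra ℝ n]
    (h2step : ∀ x y w : n, ⁅⁅x, y⁆, w⁆ = 0)
    (B : LinearMap.BilinForm ℝ n)
    (hBnd : B.Nondegenerate)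
    (zc : Submodule ℝ n) (hzc : ∀ x : n, x ∈ zc ↔ ∀ y : n, ⁅x, y⁆ = 0)
    (adP : n →ₗ[ℝ] n →ₗ[ℝ] n)
    (hadP : ∀ x y w : n, B (adP x y) w = B y ⁅x, w⁆)
    (mul : n → n → n) (hmul : ∀ x y, mul x y = x + y + (2:ℝ)⁻¹ • ⁅x, y⁆)
    (astar xstar ξ : n) (hcentral : astar ∈ zc)
    (hxperp : ∀ y : n, B xstar ⁅xstar, y⁆ = 0)
    (a' : n) (ha'def : a' = astar + ⁅xstar, ξ⁆)
    (ha'perp : ∀ y : n, B a' ⁅xstar, y⁆ = 0)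
    (ωstar : ℝ)
    (hωstar : ωstar = if B (a' + xstar) (a' + xstar) ≠ 0
        then Real.sqrt |B (a' + xstar) (a' + xstar)| else 1)
    (γ : ℝ → n)
    (hγ : ∀ t : ℝ, γ t = mul ξ ((t / ωstar) • (a' + xstar))) :
    (∀ t : ℝ, mul (astar + xstar) (γ t) = γ (t + ωstar)) ∧
    adP (a' + xstar) (a' + xstar) = 0 ∧
    (B (a' + xstar) (a' + xstar) ≠ 0 →
      |B (ωstar⁻¹ • (a' + xstar)) (ωstar⁻¹ • (a' + xstar))| = 1) := by
  obtain rfl : mul = bchMul ℝ := funext₂ hmul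
  have hcen : ∀ y : n, ⁅astar, y⁆ = 0 := (hzc astar).mp hcentral
  have hlie : ∀ y : n, ⁅a' + xstar, y⁆ = ⁅xstar, y⁆ := fun y => by
    simp only [ha'def, add_lie, hcen, h2step, zero_add]
  have hconj : a' + xstar = (astar + xstar) + ⁅astar + xstar, ξ⁆ := by
    rw [ha'def, add_lie, hcen, zero_add, add_right_comm]
  have hω : ωstar ≠ 0 := by
    rw [hωstar]; split_ifs with h
    exacts [Real.sqrt_ne_zero'.mpr (abs_pos.mpr h), one_ne_zero]
  refine ⟨fun t => ?_, adjoint_apply_self_eq_zero hBnd.1 hadP fun y => ?_, fun h => ?_⟩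
  · rw [hγ, hγ, add_div, div_self hω, hconj, bchMul_bchMul_smul_conj h2step]
  · rw [hlie, map_add, LinearMap.add_apply, ha'perp, hxperp, add_zero]
  · rw [hωstar, if_pos h]
    exact abs_apply_inv_sqrt_smul_self B h

/-- Translation of geodesics: `N` is a simply connected 2-step nilpotent Lie group,
modeled in exponential coordinates via the BCH product `mul x y = x + y + ½[x,y]`.
Given `φ ∈ N` with `log φ = a* + x*` (`a*` central, `x* ∈ V ⊕ E`) such that
`x* ⊥ [x*, n]` and `a' ⊥ [x*, n]`, where `a' = a* + [x*, ξ]` for some `ξ ∈ n`, the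
curve `γ(t) = exp(ξ) · exp((t/ω*) (a' + x*))` is translated by `φ`:
`φ γ(t) = γ(t + ω*)`, where `ω* = |a' + x*|` if `a' + x*` is non-null and `ω* = 1`
otherwise; `γ` is a geodesic (its velocity direction `c = (a' + x*)/ω*` satisfies
the geodesic condition `ad⁺_c c = 0`), of unit speed when `a' + x*` is non-null. -/
theorem translated_geodesics_exist
    {n : Type*} [LieRing n] [LieAlgebra ℝ n]
    (h2step : ∀ x y w : n, ⁅⁅x, y⁆, w⁆ = 0)
    (B : LinearMap.BilinForm ℝ n) (hBsymm : ∀ x y : n, B x y = B y x)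
    (hBnd : B.Nondegenerate)
    (zc : Submodule ℝ n) (hzc : ∀ x : n, x ∈ zc ↔ ∀ y : n, ⁅x, y⁆ = 0)
    (adP : n →ₗ[ℝ] n →ₗ[ℝ] n)
    (hadP : ∀ x y w : n, B (adP x y) w = B y ⁅x, w⁆)
    (mul : n → n → n) (hmul : ∀ x y, mul x y = x + y + (2:ℝ)⁻¹ • ⁅x, y⁆)
    (astar xstar ξ : n) (hcentral : astar ∈ zc)
    (hxperp : ∀ y : n, B xstar ⁅xstar, y⁆ = 0)
    (a' : n) (ha'def : a' = astar + ⁅xstar, ξ⁆)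
    (ha'perp : ∀ y : n, B a' ⁅xstar, y⁆ = 0)
    (ωstar : ℝ)
    (hωstar : ωstar = if B (a' + xstar) (a' + xstar) ≠ 0
        then Real.sqrt |B (a' + xstar) (a' + xstar)| else 1)
    (γ : ℝ → n)
    (hγ : ∀ t : ℝ, γ t = mul ξ ((t / ωstar) • (a' + xstar))) :
    (∀ t : ℝ, mul (astar + xstar) (γ t) = γ (t + ωstar)) ∧
    adP (a' + xstar) (a' + xstar) = 0 ∧
    (B (a' + xstar) (a' + xstar) ≠ 0 →
      |B (ωstar⁻¹ • (a' + xstar)) (ωstar⁻¹ • (a' + xstar))| = 1) :=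
  translated_geodesics_exist_general h2step B hBnd zc hzc adP hadP mul hmul astar xstar ξ hcentral
    hxperp a' ha'def ha'perp ωstar hωstar γ hγ
end

section
/- Given a vector space n = U⊕Z⊕V⊕E with inner product and involution ι as specified, and a linear map j: U⊕Z → End(V⊕E) satisfying ⟨j(a)x, ι j(a)x⟩ = ⟨a,ιa⟩⟨x,ιx⟩ and j(a)² = −⟨a,ιa⟩·Id, the bracket defined by ⟨[x,y], ιa⟩ = ⟨j(a)x, ιy⟩ (for x,y ∈ V⊕E, extended by zero on central elements) is skew-symmetric and makes n a 2-step nilpotent Lie algebra of pH-type with center containing U⊕Z. -/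
/-- Construction of Lie algebras of pH-type.  Given a vector space
`n = U ⊕ Z ⊕ V ⊕ E` with nondegenerate symmetric bilinear form `B` (with `U, V`
dually paired null subspaces and `Z, E` nondegenerate), involution `ι` as specified,
and a linear map `j : U ⊕ Z → End (V ⊕ E)` satisfying
`⟨j(a)x, ι j(a)x⟩ = ⟨a, ιa⟩⟨x, ιx⟩` and `j(a)² = -⟨a, ιa⟩ • Id`, any bracket
defined by `⟨[x,y], ιa⟩ = ⟨j(a)x, ιy⟩` for `x, y ∈ V ⊕ E` and extended by zero on
central elements is skew-symmetric and makes `n` a 2-step nilpotent Lie algebra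
(of pH-type) whose center contains `U ⊕ Z`. -/
theorem pH_type_construction
    {n : Type*} [AddCommGroup n] [Module ℝ n]
    (B : LinearMap.BilinForm ℝ n) (hBsymm : ∀ x y : n, B x y = B y x)
    (hBnd : B.Nondegenerate)
    (U Z V E : Submodule ℝ n)
    (hdecomp : (U ⊔ Z) ⊔ (V ⊔ E) = ⊤) (hdisj : (U ⊔ Z) ⊓ (V ⊔ E) = ⊥)
    (ι : n →ₗ[ℝ] n) (hι2 : ∀ x, ι (ι x) = x) (hιsa : ∀ x y : n, B (ι x) y = B x (ι y))
    (hιU : ∀ x ∈ U, ι x ∈ V) (hιV : ∀ x ∈ V, ι x ∈ U)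
    (hιZ : ∀ x ∈ Z, ι x ∈ Z) (hιE : ∀ x ∈ E, ι x ∈ E)
    (hιnd : ∀ c ∈ U ⊔ Z, (∀ a ∈ U ⊔ Z, B c (ι a) = 0) → c = 0)
    (j : n →ₗ[ℝ] n →ₗ[ℝ] n)
    (hjmap : ∀ a ∈ U ⊔ Z, ∀ x ∈ V ⊔ E, j a x ∈ V ⊔ E)
    (hj1 : ∀ a ∈ U ⊔ Z, ∀ x ∈ V ⊔ E, B (j a x) (ι (j a x)) = B a (ι a) * B x (ι x))
    (hj2 : ∀ a ∈ U ⊔ Z, ∀ x ∈ V ⊔ E, j a (j a x) = (-(B a (ι a))) • x)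
    (pic piv : n →ₗ[ℝ] n)
    (hpisum : ∀ x : n, pic x + piv x = x)
    (hpic : ∀ x : n, pic x ∈ U ⊔ Z) (hpiv : ∀ x : n, piv x ∈ V ⊔ E)
    (hpic1 : ∀ x ∈ U ⊔ Z, pic x = x) (hpiv1 : ∀ x ∈ V ⊔ E, piv x = x)
    (br : n →ₗ[ℝ] n →ₗ[ℝ] n)
    (hbrmem : ∀ x y : n, br x y ∈ U ⊔ Z)
    (hbrdef : ∀ x ∈ V ⊔ E, ∀ y ∈ V ⊔ E, ∀ a ∈ U ⊔ Z,
      B (br x y) (ι a) = B (j a x) (ι y))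
    (hbrext : ∀ x y : n, br x y = br (piv x) (piv y)) :
    (∀ x y : n, br x y = - br y x) ∧
    (∀ x : n, br x x = 0) ∧
    (∀ x y w : n, br (br x y) w = 0) ∧
    (∀ x y w : n, br x (br y w) + br y (br w x) + br w (br x y) = 0) ∧
    (∀ a ∈ U ⊔ Z, ∀ x : n, br a x = 0) := by

  have hsym : ∀ x y : n, B x (ι y) = B y (ι x) := by
    intro x y
    rw [← hιsa, hBsymm]
  have pol : ∀ a ∈ U ⊔ Z, ∀ x ∈ V ⊔ E, ∀ y ∈ V ⊔ E,
      B (j a x) (ι (j a y)) = B a (ι a) * B x (ι y) := by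
    intro a ha x hx y hy
    have h := hj1 a ha (x + y) (add_mem hx hy)
    have hx1 := hj1 a ha x hx
    have hy1 := hj1 a ha y hy
    simp only [map_add, LinearMap.add_apply] at h
    have s1 : B (j a y) (ι (j a x)) = B (j a x) (ι (j a y)) := hsym _ _
    have s2 : B y (ι x) = B x (ι y) := hsym _ _
    linear_combination h/2 - hx1/2 - hy1/2 - s1/2 + (B a (ι a))/2 * s2
  have keyq : ∀ a ∈ U ⊔ Z, ∀ x ∈ V ⊔ E, ∀ y ∈ V ⊔ E,
      B a (ι a) * (B (j a x) (ι y) + B (j a y) (ι x)) = 0 := by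
    intro a ha x hx y hy
    have hmy := hjmap a ha y hy
    have h := pol a ha x hx (j a y) hmy
    rw [hj2 a ha y hy] at h
    simp only [map_smul, smul_eq_mul] at h
    have hs : B x (ι (j a y)) = B (j a y) (ι x) := hsym _ _
    linear_combination -h - (B a (ι a)) * hs
  have Fzero : ∀ x ∈ V ⊔ E, ∀ y ∈ V ⊔ E, ∀ a ∈ U ⊔ Z,
      B (j a x) (ι y) + B (j a y) (ι x) = 0 := by
    intro x hx y hy a ha
    by_contra hF
    have hqa : B a (ι a) = 0 := by
      rcases mul_eq_zero.mp (keyq a ha x hx y hy) with h | h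
      · exact h
      · exact absurd h hF
    have hBa : ∀ b ∈ U ⊔ Z, B a (ι b) = 0 := by
      intro b hb
      have h1 := keyq (a + b) (add_mem ha hb) x hx y hy
      have h2 := keyq (a - b) (sub_mem ha hb) x hx y hy
      have h3 := keyq b hb x hx y hy
      simp only [map_add, map_sub, LinearMap.add_apply, LinearMap.sub_apply] at h1 h2
      have s1 : B b (ι a) = B a (ι b) := hsym _ _
      have key2 : B a (ι b) * (B (j a x) (ι y) + B (j a y) (ι x)) = 0 := by
        linear_combination h1/4 - h2/4 - h3/2 - ((B (j b x) (ι y) + B (j b y) (ι x))/2) * hqa - ((B (j a x) (ι y) + B (j a y) (ι x))/2) * s1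
      rcases mul_eq_zero.mp key2 with h | h
      · exact h
      · exact absurd h hF
    have ha0 : a = 0 := hιnd a ha hBa
    rw [ha0] at hF
    simp at hF
  have skew' : ∀ x ∈ V ⊔ E, ∀ y ∈ V ⊔ E, br x y = - br y x := by
    intro x hx y hy
    have hc : br x y + br y x ∈ U ⊔ Z := add_mem (hbrmem x y) (hbrmem y x)
    have h0 : br x y + br y x = 0 := by
      refine hιnd _ hc (fun a ha => ?_)
      simp only [map_add, LinearMap.add_apply]
      rw [hbrdef x hx y hy a ha, hbrdef y hy x hx a ha]
      exact Fzero x hx y hy a ha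
    exact eq_neg_of_add_eq_zero_left h0
  have skew : ∀ x y : n, br x y = - br y x := by
    intro x y
    rw [hbrext x y, hbrext y x]
    exact skew' _ (hpiv x) _ (hpiv y)
  have central : ∀ a ∈ U ⊔ Z, ∀ x : n, br a x = 0 := by
    intro a ha x
    have hpa : piv a = 0 := by
      have h := hpisum a
      rw [hpic1 a ha] at h
      exact add_eq_left.mp h
    rw [hbrext a x, hpa]
    simp
  have brxx : ∀ x : n, br x x = 0 := by
    intro x
    have h2 : (2 : ℝ) • br x x = 0 := by
      rw [two_smul]
      nth_rewrite 1 [skew x x]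
      exact neg_add_cancel _
    rcases smul_eq_zero.mp h2 with h | h
    · norm_num at h
    · exact h
  have rcentral : ∀ x : n, ∀ c ∈ U ⊔ Z, br x c = 0 := by
    intro x c hc
    rw [skew x c, central c hc x, neg_zero]
  refine ⟨skew, brxx, fun x y w => central _ (hbrmem x y) w, fun x y w => ?_, central⟩
  rw [rcentral x _ (hbrmem y w), rcentral y _ (hbrmem w x), rcentral w _ (hbrmem x y)]
  simp
end
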